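/- Let G = G(Q^n,p) be a random subgraph of the n-cube with p = p(n) ≥ n^{-2/3}, and let a > 0 be a constant. Then almost surely G contains no vertex v such that there are at least n^a/p vertices u at distance one or two from v in Q^n with degree d_G(u) ≥ np + np/log n. -/

import Mathlib

open MeasureTheory Filter Asymptotics

noncomputable section

/-- The `n`-dimensional cube graph `Q^n`: vertices are vectors in `{0,1}^n`,
two vertices adjacent iff they differ in exactly one coordinate. -/
def cubeGraph (n : ℕ) : SimpleGraph (Fin n → Bool) where
  Adj x y := hammingDist x y = 1
  symm := ⟨fun x y h => by show hammingDist y x = 1; rwa [hammingDist_comm]⟩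
  loopless := ⟨fun x h => by simp [hammingDist_self] at h⟩

/-- The subgraph of the `n`-cube determined by a configuration `ω` of edge indicators:
an edge of `Q^n` is kept iff its indicator is `true`. -/
def randCube (n : ℕ) (ω : Sym2 (Fin n → Bool) → Bool) : SimpleGraph (Fin n → Bool) where
  Adj x y := (cubeGraph n).Adj x y ∧ ω s(x, y) = true
  symm := ⟨fun x y h => ⟨(cubeGraph n).adj_symm h.1, by rw [Sym2.eq_swap]; exact h.2⟩⟩
  loopless := ⟨fun x h => (cubeGraph n).loopless.irrefl x h.1⟩

/-- The product Bernoulli(p) measure on edge-indicator configurations: each potential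
edge appears independently with probability `p`. -/
def cubeMeasure (n : ℕ) (p : ℝ) : Measure (Sym2 (Fin n → Bool) → Bool) :=
  Measure.pi fun _ => (PMF.bernoulli (min (Real.toNNReal p) 1) (min_le_right _ _)).toMeasure

/-- Degree of a vertex. -/
def deg {V : Type*} [Fintype V] (G : SimpleGraph V) (v : V) : ℕ := (G.neighborSet v).ncard

/-- Maximum degree. -/
def maxDeg {V : Type*} [Fintype V] (G : SimpleGraph V) : ℕ := ⨆ v, deg G v

/-- Adjacency matrix over ℝ. -/
def adjMat {V : Type*} [Fintype V] (G : SimpleGraph V) : Matrix V V ℝ :=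
  @SimpleGraph.adjMatrix ℝ V G (Classical.decRel _) _ _

theorem adjMat_isHermitian {V : Type*} [Fintype V] (G : SimpleGraph V) :
    (adjMat G).IsHermitian := by
  apply Matrix.ext
  intro i j
  simp only [adjMat, Matrix.conjTranspose_apply, SimpleGraph.adjMatrix_apply, star_trivial]
  by_cases h : G.Adj i j
  · rw [if_pos h, if_pos (G.adj_symm h)]
  · rw [if_neg h, if_neg (fun hji => h (G.adj_symm hji))]

/-- The largest eigenvalue of the adjacency matrix of `G`. -/
def lambda1 {V : Type*} [Fintype V] [DecidableEq V] (G : SimpleGraph V) : ℝ :=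
  ⨆ v, (adjMat_isHermitian G).eigenvalues v

/-- `κ(n) = max { k : 2^n C(n,k) p^k (1-p)^{n-k} ≥ 1 }`. -/
def kappa (n : ℕ) (p : ℝ) : ℕ :=
  sSup {k : ℕ | 1 ≤ (2 : ℝ) ^ n * n.choose k * p ^ k * (1 - p) ^ (n - k)}

/-!
Fix a centre `v`. If at least `n^a / p` vertices at distance one or two from `v` have degree at
least `t = ⌈np(1 + 1/log n)⌉`, then `K = ⌈n^a / (2p)⌉` of them lie on one Hamming sphere around
`v`. Two vertices on a common sphere are at even distance, hence non-adjacent, so their stars are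
disjoint sets of edges and the expectation of `∏_{u ∈ T} C(d(u), k)` factorises as
`(C(n,k) p^k)^K`. Markov's inequality with `k = ⌈np / (2 log n)⌉` bounds the probability that every
vertex of `T` has degree at least `t` by `exp(-npK / (16 log² n))`, which beats the union bound
`2^(n+1) n^(2K)` over the centre, the sphere and `T` once `np ≥ 64 log³ n` and `n^a ≥ 192 log² n`.
-/

open Finset Real
open scoped ENNReal

instance (n : ℕ) (p : ℝ) : IsProbabilityMeasure (cubeMeasure n p) := by
  unfold cubeMeasure; infer_instance

lemma cubeMeasure_forall_true {n : ℕ} {p : ℝ} (hp : p ≤ 1) (F : Finset (Sym2 (Fin n → Bool))) :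
    cubeMeasure n p {ω | ∀ e ∈ F, ω e = true} = ENNReal.ofReal p ^ #F := by
  have hpi : {ω : Sym2 (Fin n → Bool) → Bool | ∀ e ∈ F, ω e = true}
      = Set.univ.pi fun e => if e ∈ F then {true} else Set.univ := by
    ext ω
    simp only [Set.mem_ofPred_eq, Set.mem_pi, Set.mem_univ, true_implies]
    refine forall_congr' fun e => ?_
    split_ifs <;> simp [*]
  rw [cubeMeasure, hpi, Measure.pi_pi]
  simp_rw [apply_ite, measure_univ, PMF.toMeasure_apply_singleton _ _ (measurableSet_singleton _)]
  rw [prod_ite_mem, univ_inter, prod_const]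
  simp only [min_eq_left (Real.toNNReal_le_one.mpr hp), ENNReal.ofReal]
  rfl

section UpsetMoments

variable {ι α : Type*} [Fintype ι] [DecidableEq ι] {ν : Measure (ι → Bool)} {r : ℝ≥0∞}

lemma Finset.powersetCard_filter {β : Type*} (A : Finset β) (P : β → Prop) [DecidablePred P]
    (k : ℕ) :
    (A.filter P).powersetCard k = (A.powersetCard k).filter fun S => ∀ i ∈ S, P i := by
  ext S
  simp only [mem_powersetCard, mem_filter, subset_iff]
  grind

lemma choose_card_filter_eq_sum (A : Finset ι) (ω : ι → Bool) (k : ℕ) :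
    ((#(A.filter (ω · = true))).choose k : ℝ≥0∞)
      = ∑ S ∈ A.powersetCard k, if ∀ i ∈ S, ω i = true then 1 else 0 := by
  rw [← card_powersetCard, Finset.powersetCard_filter, card_filter, Nat.cast_sum]
  simp only [Nat.cast_ite, Nat.cast_one, Nat.cast_zero]

lemma lintegral_prod_choose_card_filter
    (hν : ∀ F : Finset ι, ν {ω | ∀ i ∈ F, ω i = true} = r ^ #F)
    {T : Finset α} {D : α → Finset ι} (hD : (T : Set α).PairwiseDisjoint D) (k : ℕ) :
    ∫⁻ ω, ∏ u ∈ T, ((#((D u).filter (ω · = true))).choose k : ℝ≥0∞) ∂ν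
      = ∏ u ∈ T, ((#(D u)).choose k * r ^ k) := by
  classical
  let F : (∀ u ∈ T, Finset ι) → Finset ι := fun g => T.attach.biUnion fun x => g x.1 x.2
  have hexpand : ∀ ω : ι → Bool,
      ∏ u ∈ T, ((#((D u).filter (ω · = true))).choose k : ℝ≥0∞)
        = ∑ g ∈ T.pi fun u => (D u).powersetCard k,
            {ω : ι → Bool | ∀ i ∈ F g, ω i = true}.indicator 1 ω := by
    intro ω
    simp_rw [choose_card_filter_eq_sum, prod_sum, prod_boole, Set.indicator_apply,
      Set.mem_ofPred_eq, Pi.one_apply]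
    refine sum_congr rfl fun g _ => ?_
    congr 1
    simp only [F, mem_biUnion, mem_attach, true_and]
    exact propext ⟨fun h i ⟨x, hi⟩ => h x trivial i hi, fun h x _ i hi => h i ⟨x, hi⟩⟩
  have hcard : ∀ g ∈ T.pi fun u => (D u).powersetCard k, #(F g) = k * #T := by
    intro g hg
    have hg' : ∀ x : T, g x.1 x.2 ⊆ D x.1 ∧ #(g x.1 x.2) = k :=
      fun x => mem_powersetCard.mp (mem_pi.mp hg x.1 x.2)
    rw [card_biUnion, sum_congr rfl fun x _ => (hg' x).2, sum_const, card_attach, smul_eq_mul,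
      mul_comm]
    intro x _ y _ hxy
    exact (hD x.2 y.2 (Subtype.coe_injective.ne hxy)).mono (hg' x).1 (hg' y).1
  simp_rw [hexpand]
  rw [lintegral_finsetSum _ fun _ _ => Measurable.of_discrete]
  simp_rw [lintegral_indicator_one MeasurableSet.of_discrete, hν]
  rw [sum_congr rfl fun g hg => by rw [hcard g hg], sum_const, card_pi, prod_mul_distrib,
    prod_const, ← pow_mul, nsmul_eq_mul]
  simp [card_powersetCard]

lemma choose_pow_mul_measure_le_prod
    (hν : ∀ F : Finset ι, ν {ω | ∀ i ∈ F, ω i = true} = r ^ #F)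
    {T : Finset α} {D : α → Finset ι} (hD : (T : Set α).PairwiseDisjoint D) (t k : ℕ) :
    (t.choose k : ℝ≥0∞) ^ #T * ν {ω | ∀ u ∈ T, t ≤ #((D u).filter (ω · = true))}
      ≤ ∏ u ∈ T, ((#(D u)).choose k * r ^ k) := by
  rw [← lintegral_prod_choose_card_filter hν hD k, ← prod_const]
  refine le_trans ?_ (mul_meas_ge_le_lintegral₀ Measurable.of_discrete.aemeasurable
    (∏ _u ∈ T, (t.choose k : ℝ≥0∞)))
  gcongr with ω
  exact fun hω => prod_le_prod' fun u hu => by exact_mod_cast Nat.choose_le_choose k (hω u hu)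

end UpsetMoments

section HammingSphere

variable {ι : Type*} [Fintype ι]

lemma even_hammingDist_add_hammingDist_add (x y z : ι → Bool) :
    Even (hammingDist x y + hammingDist y z + hammingDist x z) := by
  simp only [hammingDist, card_filter, ← sum_add_distrib]
  refine sum_induction _ Even (fun _ _ => Even.add) .zero fun i _ => ?_
  cases x i <;> cases y i <;> cases z i <;> decide

variable [DecidableEq ι]

def hammingSphere (v : ι → Bool) (j : ℕ) : Finset (ι → Bool) :=
  univ.filter fun u => hammingDist u v = j

lemma card_hammingSphere_le (v : ι → Bool) (j : ℕ) :
    #(hammingSphere v j) ≤ (Fintype.card ι).choose j := by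
  have hinj : Set.InjOn (fun u : ι → Bool => univ.filter fun i => u i ≠ v i)
      (hammingSphere v j) := by
    intro u _ u' _ h
    funext i
    have hi := congrArg (i ∈ ·) h
    simp only [mem_filter, mem_univ, true_and, eq_iff_iff] at hi
    revert hi
    cases u i <;> cases u' i <;> cases v i <;> simp
  simpa [card_powersetCard] using card_le_card_of_injOn (t := univ.powersetCard j) _
    (fun u hu => by simpa [mem_powersetCard, hammingSphere, hammingDist] using hu) hinj

lemma hammingDist_ne_one_of_mem_hammingSphere {v u u' : ι → Bool} {j : ℕ}
    (hu : u ∈ hammingSphere v j) (hu' : u' ∈ hammingSphere v j) : hammingDist u u' ≠ 1 := by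
  simp only [hammingSphere, mem_filter, mem_univ, true_and] at hu hu'
  intro h
  have := even_hammingDist_add_hammingDist_add u v u'
  rw [hu, hammingDist_comm v u', hu', h] at this
  exact Nat.even_add_one.mp this (Even.add_self j)

end HammingSphere

section CubeStars

variable {n : ℕ}

def starEdges (u : Fin n → Bool) : Finset (Sym2 (Fin n → Bool)) :=
  (hammingSphere u 1).image fun w => s(u, w)

lemma deg_randCube_eq_card_filter (ω : Sym2 (Fin n → Bool) → Bool) (u : Fin n → Bool) :
    deg (randCube n ω) u = #((starEdges u).filter (ω · = true)) := by
  rw [starEdges, filter_image, card_image_of_injective _ fun _ _ => Sym2.congr_right.mp, deg,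
    ← Set.ncard_coe_finset]
  congr 1
  ext w
  simp [randCube, cubeGraph, hammingSphere, hammingDist_comm]

lemma card_starEdges_le (u : Fin n → Bool) : #(starEdges u) ≤ n :=
  card_image_le.trans (by simpa using card_hammingSphere_le u 1)

lemma pairwiseDisjoint_starEdges {T : Finset (Fin n → Bool)}
    (hT : ∀ u ∈ T, ∀ u' ∈ T, hammingDist u u' ≠ 1) :
    (T : Set (Fin n → Bool)).PairwiseDisjoint starEdges := by
  intro u hu u' hu' hne
  rw [Function.onFun, disjoint_left]
  intro e he he'
  obtain ⟨w, hw, rfl⟩ := mem_image.mp he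
  obtain ⟨w', -, hw'⟩ := mem_image.mp he'
  rcases Sym2.eq_iff.mp hw' with ⟨rfl, -⟩ | ⟨rfl, -⟩
  · exact hne rfl
  · simp only [hammingSphere, mem_filter, mem_univ, true_and] at hw
    exact hT u' hu' u hu hw

lemma choose_pow_mul_measureReal_forall_le_deg_le {p : ℝ} (hp0 : 0 ≤ p) (hp1 : p ≤ 1)
    {v : Fin n → Bool} {j : ℕ} {T : Finset (Fin n → Bool)} (hT : T ⊆ hammingSphere v j)
    (t k : ℕ) :
    (t.choose k : ℝ) ^ #T * (cubeMeasure n p).real {ω | ∀ u ∈ T, t ≤ deg (randCube n ω) u}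
      ≤ (n.choose k * p ^ k) ^ #T := by
  have hdisj := pairwiseDisjoint_starEdges fun u hu u' hu' =>
    hammingDist_ne_one_of_mem_hammingSphere (hT hu) (hT hu')
  have hbound := choose_pow_mul_measure_le_prod (cubeMeasure_forall_true hp1) hdisj t k
  simp_rw [← deg_randCube_eq_card_filter] at hbound
  have hstar : ∏ u ∈ T, ((#(starEdges u)).choose k * ENNReal.ofReal p ^ k)
      ≤ ENNReal.ofReal ((n.choose k * p ^ k) ^ #T) := by
    rw [ENNReal.ofReal_pow (by positivity), ENNReal.ofReal_mul (by positivity),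
      ENNReal.ofReal_natCast, ENNReal.ofReal_pow hp0]
    exact prod_le_pow_card _ _ _ fun u _ => by
      gcongr; exact card_starEdges_le u
  rw [measureReal_def]
  simpa using ENNReal.toReal_le_of_le_ofReal (by positivity) (hbound.trans hstar)

end CubeStars

section UnionBound

lemma exists_subset_hammingSphere_of_le_ncard {ι : Type*} [Fintype ι] [DecidableEq ι]
    (d : (ι → Bool) → ℕ) {θ X : ℝ} {v : ι → Bool}
    (h : X ≤ (({u | (hammingDist u v = 1 ∨ hammingDist u v = 2) ∧ θ ≤ d u}.ncard : ℕ) : ℝ)) :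
    ∃ j ∈ ({1, 2} : Finset ℕ), ∃ T ∈ (hammingSphere v j).powersetCard ⌈X / 2⌉₊,
      ∀ u ∈ T, ⌈θ⌉₊ ≤ d u := by
  set A : ℕ → Finset (ι → Bool) := fun j => (hammingSphere v j).filter (θ ≤ d ·)
  have hset : {u | (hammingDist u v = 1 ∨ hammingDist u v = 2) ∧ θ ≤ d u} = ↑(A 1 ∪ A 2) := by
    ext u
    simp [A, hammingSphere, or_and_right]
  have hsum : X ≤ #(A 1) + #(A 2) := by
    refine h.trans ?_
    rw [hset, Set.ncard_coe_finset]
    exact_mod_cast card_union_le _ _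
  have hlarge : ∃ j ∈ ({1, 2} : Finset ℕ), ⌈X / 2⌉₊ ≤ #(A j) := by
    by_cases h1 : X / 2 ≤ #(A 1)
    · exact ⟨1, by simp, Nat.ceil_le.mpr h1⟩
    · exact ⟨2, by simp, Nat.ceil_le.mpr (by linarith)⟩
  obtain ⟨j, hj, hK⟩ := hlarge
  obtain ⟨T, hTA, hTcard⟩ := exists_subset_card_eq hK
  exact ⟨j, hj, T, mem_powersetCard.mpr ⟨hTA.trans (filter_subset _ _), hTcard⟩,
    fun u hu => Nat.ceil_le.mpr (mem_filter.mp (hTA hu)).2⟩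

lemma card_hammingSphere_le_sq {n j : ℕ} (hj : j ∈ ({1, 2} : Finset ℕ)) (v : Fin n → Bool) :
    #(hammingSphere v j) ≤ n ^ 2 := by
  refine (card_hammingSphere_le v j).trans ?_
  rw [Fintype.card_fin]
  rcases mem_insert.mp hj with rfl | hj
  · simpa using Nat.le_self_pow two_ne_zero n
  · rw [mem_singleton.mp hj]
    exact Nat.choose_le_pow n 2

lemma choose_pow_mul_measureReal_exists_subset_hammingSphere_le {n : ℕ} {p : ℝ} (hp0 : 0 ≤ p)
    (hp1 : p ≤ 1) (v : Fin n → Bool) (j t k K : ℕ) :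
    (t.choose k : ℝ) ^ K * (cubeMeasure n p).real {ω | ∃ T ∈ (hammingSphere v j).powersetCard K,
        ∀ u ∈ T, t ≤ deg (randCube n ω) u}
      ≤ (#(hammingSphere v j)).choose K * (n.choose k * p ^ k) ^ K := by
  have hset : {ω | ∃ T ∈ (hammingSphere v j).powersetCard K, ∀ u ∈ T, t ≤ deg (randCube n ω) u}
      = ⋃ T ∈ (hammingSphere v j).powersetCard K, {ω | ∀ u ∈ T, t ≤ deg (randCube n ω) u} := by
    ext ω
    simp only [Set.mem_ofPred_eq, Set.mem_iUnion, exists_prop]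
  rw [hset, ← card_powersetCard, ← nsmul_eq_mul, ← sum_const]
  refine (mul_le_mul_of_nonneg_left (measureReal_biUnion_finset_le _ _) (by positivity)).trans ?_
  rw [mul_sum]
  refine sum_le_sum fun T hT => ?_
  obtain ⟨hTsub, hTcard⟩ := mem_powersetCard.mp hT
  simpa [hTcard] using choose_pow_mul_measureReal_forall_le_deg_le hp0 hp1 hTsub t k

lemma choose_pow_mul_measureReal_clustered_le {n : ℕ} {p : ℝ} (hp0 : 0 ≤ p) (hp1 : p ≤ 1)
    (t k K : ℕ) :
    (t.choose k : ℝ) ^ K * (cubeMeasure n p).real {ω | ∃ v, ∃ j ∈ ({1, 2} : Finset ℕ),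
        ∃ T ∈ (hammingSphere v j).powersetCard K, ∀ u ∈ T, t ≤ deg (randCube n ω) u}
      ≤ 2 ^ n * 2 * (n ^ 2).choose K * (n.choose k * p ^ k) ^ K := by
  set S : (Fin n → Bool) → ℕ → Set (Sym2 (Fin n → Bool) → Bool) := fun v j =>
    {ω | ∃ T ∈ (hammingSphere v j).powersetCard K, ∀ u ∈ T, t ≤ deg (randCube n ω) u}
  have hset : {ω | ∃ v, ∃ j ∈ ({1, 2} : Finset ℕ),
        ∃ T ∈ (hammingSphere v j).powersetCard K, ∀ u ∈ T, t ≤ deg (randCube n ω) u}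
      = ⋃ v, ⋃ j ∈ ({1, 2} : Finset ℕ), S v j := by
    ext ω
    simp only [S, Set.mem_ofPred_eq, Set.mem_iUnion, exists_prop]
  have hunion : (cubeMeasure n p).real (⋃ v, ⋃ j ∈ ({1, 2} : Finset ℕ), S v j)
      ≤ ∑ v, ∑ j ∈ ({1, 2} : Finset ℕ), (cubeMeasure n p).real (S v j) :=
    (measureReal_iUnion_fintype_le _).trans
      (sum_le_sum fun v _ => measureReal_biUnion_finset_le _ _)
  rw [hset]
  calc _ ≤ ∑ v, ∑ j ∈ ({1, 2} : Finset ℕ),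
          (t.choose k : ℝ) ^ K * (cubeMeasure n p).real (S v j) := by
        simp_rw [← mul_sum]
        exact mul_le_mul_of_nonneg_left hunion (by positivity)
    _ ≤ ∑ _v : Fin n → Bool, ∑ _j ∈ ({1, 2} : Finset ℕ),
          ((n ^ 2).choose K : ℝ) * (n.choose k * p ^ k) ^ K :=
        sum_le_sum fun v _ => sum_le_sum fun j hj =>
          (choose_pow_mul_measureReal_exists_subset_hammingSphere_le hp0 hp1 v j t k K).trans
            (by gcongr; exact card_hammingSphere_le_sq hj v)
    _ = 2 ^ n * 2 * (n ^ 2).choose K * (n.choose k * p ^ k) ^ K := by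
        simp only [sum_const, card_univ, Fintype.card_fun, Fintype.card_bool, Fintype.card_fin,
          nsmul_eq_mul, card_pair (show 1 ≠ 2 by norm_num)]
        push_cast
        ring

end UnionBound

section Estimates

lemma choose_mul_pow_sub_le (n t k : ℕ) : n.choose k * (t - k) ^ k ≤ n ^ k * t.choose k :=
  calc n.choose k * (t - k) ^ k ≤ n.choose k * t.descFactorial k := by
        gcongr
        exact (Nat.pow_le_pow_left (by omega) k).trans (Nat.pow_sub_le_descFactorial t k)
    _ = n.descFactorial k * t.choose k := by
        rw [Nat.descFactorial_eq_factorial_mul_choose, Nat.descFactorial_eq_factorial_mul_choose]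
        ring
    _ ≤ n ^ k * t.choose k := by
        gcongr
        exact Nat.descFactorial_le_pow n k

lemma inv_one_add_le_exp_neg_half {x : ℝ} (hx0 : 0 ≤ x) (hx1 : x ≤ 1) :
    (1 + x)⁻¹ ≤ exp (-(x / 2)) := by
  rw [inv_le_iff_one_le_mul₀ (by positivity)]
  nlinarith [add_one_le_exp (-(x / 2))]

variable {n t k K : ℕ} {q L : ℝ}

lemma choose_mul_pow_le_exp_mul_choose (hq : 0 ≤ q) (hL : 1 ≤ L) (hμ : 4 * L ≤ n * q)
    (ht : n * q + n * q / L ≤ t) (hk : n * q / (2 * L) ≤ k) (hk' : k ≤ n * q / (2 * L) + 1)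
    (hkt : k ≤ t) :
    (n.choose k : ℝ) * q ^ k ≤ exp (-(n * q / (16 * L ^ 2))) * t.choose k := by
  set μ : ℝ := n * q
  have hL0 : 0 < L := by linarith
  have hμ0 : 0 < μ := by linarith
  -- `t - k` exceeds `μ` by a factor `1 + 1/(4L)`, which makes the ratio below exponentially small
  have hgap : μ * (1 + 1 / (4 * L)) ≤ t - k := by
    have hy : 1 ≤ μ / (4 * L) := by rw [le_div_iff₀ (by positivity)]; linarith
    have h1 : μ / L = 4 * (μ / (4 * L)) := by field_simp
    have h2 : μ / (2 * L) = 2 * (μ / (4 * L)) := by field_simp; ring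
    have h3 : μ * (1 + 1 / (4 * L)) = μ + μ / (4 * L) := by ring
    linarith
  have hgap0 : (0 : ℝ) < t - k := lt_of_lt_of_le (by positivity) hgap
  have hratio : μ / (t - k) ≤ exp (-(1 / (8 * L))) :=
    calc μ / (t - k) ≤ μ / (μ * (1 + 1 / (4 * L))) := by gcongr
      _ = (1 + 1 / (4 * L))⁻¹ := by field_simp
      _ ≤ exp (-(1 / (4 * L) / 2)) :=
          inv_one_add_le_exp_neg_half (by positivity) (by rw [div_le_one (by positivity)]; linarith)
      _ = exp (-(1 / (8 * L))) := by ring_nf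
  have hnat := (Nat.cast_le (α := ℝ)).mpr (choose_mul_pow_sub_le n t k)
  push_cast [Nat.cast_sub hkt] at hnat
  calc (n.choose k : ℝ) * q ^ k ≤ (μ / (t - k)) ^ k * t.choose k := by
        rw [div_pow, div_mul_eq_mul_div, le_div_iff₀ (by positivity)]
        calc (n.choose k : ℝ) * q ^ k * (t - k) ^ k = n.choose k * (t - k) ^ k * q ^ k := by ring
          _ ≤ n ^ k * t.choose k * q ^ k := by gcongr
          _ = μ ^ k * t.choose k := by ring
    _ ≤ exp (-(1 / (8 * L))) ^ k * t.choose k := by gcongr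
    _ = exp (-(k / (8 * L))) * t.choose k := by rw [← exp_nat_mul]; ring_nf
    _ ≤ exp (-(μ / (16 * L ^ 2))) * t.choose k := by
        refine mul_le_mul_of_nonneg_right (exp_le_exp.mpr (neg_le_neg ?_)) (by positivity)
        calc μ / (16 * L ^ 2) = μ / (2 * L) / (8 * L) := by field_simp; ring
          _ ≤ k / (8 * L) := by gcongr

lemma two_pow_mul_choose_sq_le_exp (hnL : n ≤ exp L) :
    2 ^ n * 2 * ((n ^ 2).choose K : ℝ) ≤ exp (n + 1 + 2 * L * K) := by
  have h2e : (2 : ℝ) ≤ exp 1 := by linarith [add_one_le_exp (1 : ℝ)]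
  have hchoose : ((n ^ 2).choose K : ℝ) ≤ ((n : ℝ) ^ 2) ^ K := by
    exact_mod_cast Nat.choose_le_pow (n ^ 2) K
  calc 2 ^ n * 2 * ((n ^ 2).choose K : ℝ) ≤ exp 1 ^ (n + 1) * (exp L ^ 2) ^ K := by
        refine mul_le_mul ?_ (hchoose.trans (by gcongr)) (by positivity) (by positivity)
        rw [pow_succ]
        gcongr
    _ = exp (n + 1 + 2 * L * K) := by
        rw [← exp_nat_mul, ← pow_mul, ← exp_nat_mul, ← exp_add]
        push_cast
        ring_nf

lemma two_pow_mul_choose_sq_mul_pow_le_exp_neg_mul (hq : 0 ≤ q) (hL : 1 ≤ L) (hnL : n ≤ exp L)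
    (hμ : 64 * L ^ 3 ≤ n * q) (hK : 2 * n + 1 ≤ n * q * K / (32 * L ^ 2))
    (ht : n * q + n * q / L ≤ t) (hk : n * q / (2 * L) ≤ k) (hk' : k ≤ n * q / (2 * L) + 1)
    (hkt : k ≤ t) :
    2 ^ n * 2 * ((n ^ 2).choose K : ℝ) * (n.choose k * q ^ k) ^ K
      ≤ exp (-n) * (t.choose k) ^ K := by
  have hL0 : 0 < L := by linarith
  have hratio := choose_mul_pow_le_exp_mul_choose hq hL (by nlinarith [one_le_pow₀ (n := 2) hL])
    ht hk hk' hkt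
  -- the factor `L` lost in the union bound over `n ^ (2K)` sets is absorbed since `μ ≥ 64 L³`
  have hLK : 2 * L * K ≤ n * q * K / (32 * L ^ 2) := by
    rw [le_div_iff₀ (by positivity)]
    nlinarith [(Nat.cast_nonneg K : (0 : ℝ) ≤ K)]
  calc 2 ^ n * 2 * ((n ^ 2).choose K : ℝ) * (n.choose k * q ^ k) ^ K
      ≤ exp (n + 1 + 2 * L * K) * (exp (-(n * q / (16 * L ^ 2))) * t.choose k) ^ K := by
        gcongr
        exact two_pow_mul_choose_sq_le_exp hnL
    _ = exp (n + 1 + 2 * L * K - n * q * K / (16 * L ^ 2)) * (t.choose k) ^ K := by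
        rw [mul_pow, ← exp_nat_mul, ← mul_assoc, ← exp_add]
        ring_nf
    _ ≤ exp (-n) * (t.choose k) ^ K := by
        gcongr
        have : n * q * K / (16 * L ^ 2) = 2 * (n * q * K / (32 * L ^ 2)) := by ring
        linarith

end Estimates

def clusteredHighDegree (n : ℕ) (a q : ℝ) : Set (Sym2 (Fin n → Bool) → Bool) :=
  {ω | ∃ v : Fin n → Bool, (n : ℝ) ^ a / q ≤
    (({u | (hammingDist u v = 1 ∨ hammingDist u v = 2) ∧
      (n : ℝ) * q + (n : ℝ) * q / Real.log n ≤ (deg (randCube n ω) u : ℝ)}.ncard : ℕ) : ℝ)}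

lemma measureReal_clusteredHighDegree_le {n : ℕ} {a q : ℝ} (hq0 : 0 < q) (hq1 : q ≤ 1)
    (hL : 1 ≤ log n) (h64 : 64 * log n ^ 3 ≤ n * q) (h192 : 192 * log n ^ 2 ≤ (n : ℝ) ^ a) :
    (cubeMeasure n q).real (clusteredHighDegree n a q) ≤ exp (-n) := by
  set L := log n
  set μ : ℝ := n * q
  set t := ⌈μ + μ / L⌉₊
  set k := ⌈μ / (2 * L)⌉₊
  set K := ⌈(n : ℝ) ^ a / q / 2⌉₊
  have hn : (1 : ℝ) ≤ n := by
    rcases Nat.eq_zero_or_pos n with rfl | hn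
    · norm_num [L] at hL
    · exact_mod_cast hn
  have hL0 : 0 < L := by linarith
  have hμ : 4 ≤ μ := by nlinarith [one_le_pow₀ (n := 3) hL]
  have ht : μ + μ / L ≤ t := Nat.le_ceil _
  have hk : μ / (2 * L) ≤ k := Nat.le_ceil _
  have hk' : (k : ℝ) ≤ μ / (2 * L) + 1 := (Nat.ceil_lt_add_one (by positivity)).le
  have hkt : k ≤ t := by
    have : μ / (2 * L) ≤ μ / 2 := by gcongr; linarith
    exact_mod_cast show (k : ℝ) ≤ t by linarith [div_nonneg (by linarith : (0 : ℝ) ≤ μ) hL0.le]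
  have hK : 2 * n + 1 ≤ μ * K / (32 * L ^ 2) := by
    have hKX : (n : ℝ) ^ a / q / 2 ≤ K := Nat.le_ceil _
    have hμK : n * (n : ℝ) ^ a / 2 ≤ μ * K := by
      calc n * (n : ℝ) ^ a / 2 = μ * ((n : ℝ) ^ a / q / 2) := by simp only [μ]; field_simp
        _ ≤ μ * K := by gcongr
    rw [le_div_iff₀ (by positivity)]
    nlinarith
  have hcount := choose_pow_mul_measureReal_clustered_le (n := n) hq0.le hq1 t k K
  have hnum := two_pow_mul_choose_sq_mul_pow_le_exp_neg_mul hq0.le hL (exp_log (by linarith)).ge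
    h64 hK ht hk hk' hkt
  have hsub : clusteredHighDegree n a q ⊆ {ω | ∃ v, ∃ j ∈ ({1, 2} : Finset ℕ),
      ∃ T ∈ (hammingSphere v j).powersetCard K, ∀ u ∈ T, t ≤ deg (randCube n ω) u} :=
    fun ω ⟨v, hv⟩ => ⟨v, exists_subset_hammingSphere_of_le_ncard _ hv⟩
  have hpos : (0 : ℝ) < (t.choose k) ^ K := by
    have := Nat.choose_pos hkt
    positivity
  refine le_of_mul_le_mul_left ?_ hpos
  calc _ ≤ (t.choose k : ℝ) ^ K * (cubeMeasure n q).real _ :=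
        mul_le_mul_of_nonneg_left (measureReal_mono hsub) hpos.le
    _ ≤ _ := hcount.trans hnum
    _ = _ := mul_comm _ _

lemma eventually_mul_log_pow_le_rpow (c : ℝ) (m : ℕ) {b : ℝ} (hb : 0 < b) :
    ∀ᶠ n : ℕ in atTop, c * log n ^ m ≤ (n : ℝ) ^ b := by
  have h := ((isLittleO_log_rpow_rpow_atTop (m : ℝ) hb).const_mul_left c).eventuallyLE
  filter_upwards [tendsto_natCast_atTop_atTop.eventually h] with n hn
  rw [Real.norm_eq_abs, Real.norm_eq_abs, rpow_natCast,
    abs_of_nonneg (rpow_nonneg n.cast_nonneg b)] at hn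
  exact (le_abs_self _).trans hn

lemma tendsto_measure_clusteredHighDegree {a : ℝ} (ha : 0 < a) {p : ℕ → ℝ}
    (hp : ∀ n, 0 < p n ∧ p n ≤ 1) (hplb : ∀ n : ℕ, (n : ℝ) ^ (-(2 : ℝ) / 3) ≤ p n) :
    Tendsto (fun n => cubeMeasure n (p n) (clusteredHighDegree n a (p n))) atTop (nhds 0) := by
  have hbound : ∀ᶠ n : ℕ in atTop,
      cubeMeasure n (p n) (clusteredHighDegree n a (p n)) ≤ ENNReal.ofReal (exp (-n)) := by
    filter_upwards [(tendsto_log_atTop.comp tendsto_natCast_atTop_atTop).eventually_ge_atTop 1,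
      eventually_mul_log_pow_le_rpow 64 3 (b := 1 / 3) (by norm_num),
      eventually_mul_log_pow_le_rpow 192 2 ha] with n hL h64 h192
    have hn : (0 : ℝ) < n := by
      rcases Nat.eq_zero_or_pos n with rfl | hn
      · norm_num at hL
      · exact_mod_cast hn
    have hμ : (n : ℝ) ^ (1 / 3 : ℝ) ≤ n * p n :=
      calc (n : ℝ) ^ (1 / 3 : ℝ) = n * (n : ℝ) ^ (-(2 : ℝ) / 3) := by
            rw [← rpow_one_add' hn.le (by norm_num)]; norm_num
        _ ≤ n * p n := by gcongr; exact hplb n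
    rw [← ofReal_measureReal]
    exact ENNReal.ofReal_le_ofReal
      (measureReal_clusteredHighDegree_le (hp n).1 (hp n).2 hL (h64.trans hμ) h192)
  have hexp : Tendsto (fun n : ℕ => ENNReal.ofReal (exp (-n))) atTop (nhds 0) := by
    simpa using ENNReal.tendsto_ofReal
      (tendsto_exp_atBot.comp (tendsto_neg_atTop_atBot.comp tendsto_natCast_atTop_atTop))
  exact tendsto_of_tendsto_of_tendsto_of_le_of_le' tendsto_const_nhds hexp
    (Eventually.of_forall fun _ => zero_le) hbound

/-- for `p ≥ n^{-2/3}` and a constant `a > 0`, a.s. no vertex `v` has at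
least `n^a / p` vertices within (Hamming) distance one or two whose degree in `G` is at
least `np + np / log n`. -/
theorem no_clustered_high_degree_dense (a : ℝ) (ha : 0 < a)
    (p : ℕ → ℝ) (hp : ∀ n, 0 < p n ∧ p n ≤ 1)
    (hplb : ∀ n : ℕ, (n : ℝ) ^ (-(2 : ℝ) / 3) ≤ p n) :
    Tendsto (fun n : ℕ =>
      cubeMeasure n (p n) {ω |
        ¬ ∃ v : Fin n → Bool, (n : ℝ) ^ a / p n ≤
          (({u | (hammingDist u v = 1 ∨ hammingDist u v = 2) ∧
              (n : ℝ) * p n + (n : ℝ) * p n / Real.log n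
                ≤ (deg (randCube n ω) u : ℝ)}.ncard : ℕ) : ℝ)})
      atTop (nhds 1) := by
  have h := ENNReal.Tendsto.sub tendsto_const_nhds (tendsto_measure_clusteredHighDegree ha hp hplb)
    (Or.inl ENNReal.one_ne_top)
  rw [tsub_zero] at h
  refine h.congr fun n => ?_
  exact (prob_compl_eq_one_sub MeasurableSet.of_discrete).symm
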